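/- arXiv:0708.1146 — 5 statements merged into one kernel-verified Lean document; each statement's English description precedes it below -/
import Mathlib

section
/- Let p_1 ≥ p_2 ≥ ··· ≥ p_m > 0 and λ_1,...,λ_m > 0. Define Λ_ℓ = λ_1+···+λ_ℓ, ρ_ℓ = Σ_{k=1}^ℓ λ_k p_k, p_{1ℓ} = ρ_ℓ/Λ_ℓ, and π_ℓ = p_{1ℓ} - p_{1,ℓ+1} for ℓ < m, π_m = p_{1m}. Then the sequence (1/Λ_ℓ - 1/Λ_{ℓ+1})/π_ℓ (with 1/Λ_{m+1} := 0) is nonincreasing in ℓ for ℓ = 1,...,m. -/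
open Finset

/-- Lemma 1: the ratio `(1/Λ_ℓ - 1/Λ_{ℓ+1})/π_ℓ` is nonincreasing in `ℓ`,
with the convention `1/Λ_{m+1} = 0`. -/
theorem ratio_nonincreasing (m : ℕ) (hm : 2 ≤ m) (p lam : ℕ → ℝ)
    (hp_pos : ∀ i, 1 ≤ i → i ≤ m → 0 < p i)
    (hp_mono : ∀ i, 1 ≤ i → i < m → p (i + 1) ≤ p i)
    (hlam : ∀ i, 1 ≤ i → i ≤ m → 0 < lam i)
    (Λ ρ p1 π r : ℕ → ℝ)
    (hΛ : ∀ ℓ, Λ ℓ = ∑ k ∈ Finset.Icc 1 ℓ, lam k)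
    (hρ : ∀ ℓ, ρ ℓ = ∑ k ∈ Finset.Icc 1 ℓ, lam k * p k)
    (hp1 : ∀ ℓ, p1 ℓ = ρ ℓ / Λ ℓ)
    (hπ : ∀ ℓ, 1 ≤ ℓ → ℓ < m → π ℓ = p1 ℓ - p1 (ℓ + 1))
    (hπm : π m = p1 m)
    (hπ_pos : ∀ ℓ, 1 ≤ ℓ → ℓ ≤ m → 0 < π ℓ)
    (hr : ∀ ℓ, 1 ≤ ℓ → ℓ < m → r ℓ = (1 / Λ ℓ - 1 / Λ (ℓ + 1)) / π ℓ)
    (hrm : r m = (1 / Λ m - 0) / π m) :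
    ∀ ℓ, 1 ≤ ℓ → ℓ < m → r (ℓ + 1) ≤ r ℓ := by
  have hΛpos : ∀ n, 1 ≤ n → n ≤ m → 0 < Λ n := by
    intro n h1 h2
    rw [hΛ]
    apply Finset.sum_pos
    · intro k hk
      simp only [Finset.mem_Icc] at hk
      exact hlam k hk.1 (le_trans hk.2 h2)
    · exact ⟨1, by simp [Finset.mem_Icc]; omega⟩
  have hΛstep : ∀ n : ℕ, Λ (n + 1) = Λ n + lam (n + 1) := by
    intro n
    rw [hΛ, hΛ, Finset.sum_Icc_succ_top (by omega : 1 ≤ n + 1)]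
  have hρstep : ∀ n : ℕ, ρ (n + 1) = ρ n + lam (n + 1) * p (n + 1) := by
    intro n
    rw [hρ, hρ, Finset.sum_Icc_succ_top (by omega : 1 ≤ n + 1)]
  have hρpos : ∀ n, 1 ≤ n → n ≤ m → 0 < ρ n := by
    intro n h1 h2
    rw [hρ]
    apply Finset.sum_pos
    · intro k hk
      simp only [Finset.mem_Icc] at hk
      exact mul_pos (hlam k hk.1 (le_trans hk.2 h2)) (hp_pos k hk.1 (le_trans hk.2 h2))
    · exact ⟨1, by simp [Finset.mem_Icc]; omega⟩
  -- key representation: for n < m, r n = 1 / (ρ n - p (n+1) * Λ n), with positive denom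
  have hspos : ∀ n, 1 ≤ n → n < m → 0 < ρ n - p (n + 1) * Λ n := by
    intro n h1 h2
    have hΛn := hΛpos n h1 (le_of_lt h2)
    have hΛn1 := hΛpos (n + 1) (by omega) (by omega)
    have hlamn := hlam (n + 1) (by omega) (by omega)
    have hπn := hπ_pos n h1 (le_of_lt h2)
    have key : π n * (Λ n * Λ (n + 1)) = lam (n + 1) * (ρ n - p (n + 1) * Λ n) := by
      rw [hπ n h1 h2, hp1, hp1, hΛstep, hρstep]
      field_simp
      ring
    nlinarith [mul_pos hπn (mul_pos hΛn hΛn1)]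
  have hrs : ∀ n, 1 ≤ n → n < m → r n = 1 / (ρ n - p (n + 1) * Λ n) := by
    intro n h1 h2
    have hΛn := hΛpos n h1 (le_of_lt h2)
    have hΛn1 := hΛpos (n + 1) (by omega) (by omega)
    have hlamn := hlam (n + 1) (by omega) (by omega)
    have hπn := hπ_pos n h1 (le_of_lt h2)
    have hs := hspos n h1 h2
    have key : π n * (Λ n * Λ (n + 1)) = lam (n + 1) * (ρ n - p (n + 1) * Λ n) := by
      rw [hπ n h1 h2, hp1, hp1, hΛstep, hρstep]
      field_simp
      ring
    rw [hr n h1 h2]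
    rw [div_eq_div_iff hπn.ne' hs.ne']
    have hΛn1' : Λ n + lam (n + 1) ≠ 0 := by rw [← hΛstep]; exact hΛn1.ne'
    rw [hΛstep] at key ⊢
    field_simp
    linear_combination -key
  have hrm' : r m = 1 / ρ m := by
    have hΛm := hΛpos m (by omega) le_rfl
    have hρm := hρpos m (by omega) le_rfl
    rw [hrm, hπm, hp1, sub_zero]
    field_simp
  intro ℓ hℓ1 hℓm
  have hsl := hspos ℓ hℓ1 hℓm
  rw [hrs ℓ hℓ1 hℓm]
  rcases eq_or_lt_of_le (by omega : ℓ + 1 ≤ m) with h | h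
  · -- ℓ + 1 = m
    have hstep := hρstep ℓ
    rw [h] at hstep hsl ⊢
    rw [hrm']
    apply one_div_le_one_div_of_le hsl
    have hΛl := hΛpos ℓ hℓ1 (le_of_lt hℓm)
    have hpm := hp_pos m (by omega) le_rfl
    have hlamm := hlam m (by omega) le_rfl
    nlinarith [mul_pos hpm hΛl, mul_pos hlamm hpm]
  · -- ℓ + 1 < m
    rw [hrs (ℓ + 1) (by omega) h]
    apply one_div_le_one_div_of_le hsl
    have hΛl1 := hΛpos (ℓ + 1) (by omega) (by omega)
    have hmono := hp_mono (ℓ + 1) (by omega) h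
    have expand : ρ (ℓ + 1) - p (ℓ + 1 + 1) * Λ (ℓ + 1) - (ρ ℓ - p (ℓ + 1) * Λ ℓ)
        = (p (ℓ + 1) - p (ℓ + 1 + 1)) * Λ (ℓ + 1) := by
      rw [hρstep ℓ, hΛstep ℓ]; ring
    linarith [mul_nonneg (sub_nonneg.mpr hmono) hΛl1.le, expand]
end

section
/- With p_1 ≥ ··· ≥ p_m > 0, λ_i > 0, Λ_ℓ = λ_1+···+λ_ℓ, ρ_ℓ = Σ_{k≤ℓ} λ_k p_k, p_{1ℓ} = ρ_ℓ/Λ_ℓ, and π_ℓ = p_{1ℓ} - p_{1,ℓ+1}: for 2 ≤ ℓ ≤ m-1, the inequality (π_ℓ/π_{ℓ-1})(λ_ℓ/λ_{ℓ+1}) ≥ Λ_{ℓ-1}/Λ_{ℓ+1} holds. -/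
open Finset

/-- For `2 ≤ ℓ ≤ m-1`: `(π_ℓ/π_{ℓ-1})(λ_ℓ/λ_{ℓ+1}) ≥ Λ_{ℓ-1}/Λ_{ℓ+1}`. -/
theorem pi_lambda_ratio_ineq (m : ℕ) (p lam : ℕ → ℝ)
    (hp_pos : ∀ i, 1 ≤ i → i ≤ m → 0 < p i)
    (hp_mono : ∀ i, 1 ≤ i → i < m → p (i + 1) ≤ p i)
    (hlam : ∀ i, 1 ≤ i → i ≤ m → 0 < lam i)
    (Λ ρ p1 π : ℕ → ℝ)
    (hΛ : ∀ ℓ, Λ ℓ = ∑ k ∈ Finset.Icc 1 ℓ, lam k)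
    (hρ : ∀ ℓ, ρ ℓ = ∑ k ∈ Finset.Icc 1 ℓ, lam k * p k)
    (hp1 : ∀ ℓ, p1 ℓ = ρ ℓ / Λ ℓ)
    (hπ : ∀ ℓ, 1 ≤ ℓ → ℓ < m → π ℓ = p1 ℓ - p1 (ℓ + 1))
    (hπ_pos : ∀ ℓ, 1 ≤ ℓ → ℓ < m → 0 < π ℓ)
    (ℓ : ℕ) (hℓ2 : 2 ≤ ℓ) (hℓm : ℓ ≤ m - 1) :
    Λ (ℓ - 1) / Λ (ℓ + 1) ≤ (π ℓ / π (ℓ - 1)) * (lam ℓ / lam (ℓ + 1)) := by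
  obtain ⟨k, rfl⟩ : ∃ k, ℓ = k + 2 := ⟨ℓ - 2, by omega⟩
  have hm : k + 3 ≤ m := by omega
  have hΛpos : ∀ n, 1 ≤ n → n ≤ m → 0 < Λ n := by
    intro n h1 h2
    rw [hΛ]
    apply Finset.sum_pos
    · intro i hi
      simp only [Finset.mem_Icc] at hi
      exact hlam i hi.1 (le_trans hi.2 h2)
    · exact ⟨1, by simp only [Finset.mem_Icc]; omega⟩
  have hΛs : ∀ n, Λ (n + 1) = Λ n + lam (n + 1) := by
    intro n
    rw [hΛ, hΛ, Finset.sum_Icc_succ_top (by omega : 1 ≤ n + 1)]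
  have hρs : ∀ n, ρ (n + 1) = ρ n + lam (n + 1) * p (n + 1) := by
    intro n
    rw [hρ, hρ, Finset.sum_Icc_succ_top (by omega : 1 ≤ n + 1)]
  have hL1 := hΛpos (k + 1) (by omega) (by omega)
  have hL2 := hΛpos (k + 2) (by omega) (by omega)
  have hL3 := hΛpos (k + 3) (by omega) hm
  have hl2 := hlam (k + 2) (by omega) (by omega)
  have hl3 := hlam (k + 3) (by omega) hm
  have hL2' : Λ (k + 2) = Λ (k + 1) + lam (k + 2) := hΛs (k + 1)
  have hL3' : Λ (k + 3) = Λ (k + 2) + lam (k + 3) := hΛs (k + 2)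
  have hπ1 : π (k + 1) = lam (k + 2) * (ρ (k + 1) - p (k + 2) * Λ (k + 1)) /
      (Λ (k + 1) * Λ (k + 2)) := by
    rw [hπ _ (by omega) (by omega), hp1, hp1, hρs (k + 1), hL2']
    have h2 : (0:ℝ) < Λ (k + 1) + lam (k + 2) := by rw [← hL2']; exact hL2
    field_simp
    ring
  have hπ2 : π (k + 2) = lam (k + 3) * (ρ (k + 2) - p (k + 3) * Λ (k + 2)) /
      (Λ (k + 2) * Λ (k + 3)) := by
    rw [hπ _ (by omega) (by omega), hp1, hp1, hρs (k + 2), hL3']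
    have h3 : (0:ℝ) < Λ (k + 2) + lam (k + 3) := by rw [← hL3']; exact hL3
    field_simp
    ring
  have hBpos : 0 < ρ (k + 1) - p (k + 2) * Λ (k + 1) := by
    have hpp := hπ_pos (k + 1) (by omega) (by omega)
    rw [hπ1] at hpp
    have h1 : 0 < lam (k + 2) * (ρ (k + 1) - p (k + 2) * Λ (k + 1)) := by
      have h2 := mul_pos hpp (mul_pos hL1 hL2)
      rwa [div_mul_cancel₀ _ (mul_pos hL1 hL2).ne'] at h2
    nlinarith
  have hp23 := hp_mono (k + 2) (by omega) (by omega)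
  have hAB : ρ (k + 2) - p (k + 3) * Λ (k + 2) =
      (ρ (k + 1) - p (k + 2) * Λ (k + 1)) + Λ (k + 2) * (p (k + 2) - p (k + 3)) := by
    rw [hρs (k + 1)]
    simp only [show k + 1 + 1 = k + 2 from rfl]
    rw [hL2']
    ring
  have hABle : ρ (k + 1) - p (k + 2) * Λ (k + 1) ≤ ρ (k + 2) - p (k + 3) * Λ (k + 2) := by
    rw [hAB]
    nlinarith
  simp only [show k + 2 - 1 = k + 1 from rfl, show k + 2 + 1 = k + 3 from rfl]
  rw [hπ1, hπ2]
  have hrhs : lam (k + 3) * (ρ (k + 2) - p (k + 3) * Λ (k + 2)) / (Λ (k + 2) * Λ (k + 3)) /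
      (lam (k + 2) * (ρ (k + 1) - p (k + 2) * Λ (k + 1)) / (Λ (k + 1) * Λ (k + 2))) *
      (lam (k + 2) / lam (k + 3)) =
      ((ρ (k + 2) - p (k + 3) * Λ (k + 2)) / (ρ (k + 1) - p (k + 2) * Λ (k + 1))) *
      (Λ (k + 1) / Λ (k + 3)) := by
    field_simp
  rw [hrhs]
  have h1 : (1:ℝ) ≤ (ρ (k + 2) - p (k + 3) * Λ (k + 2)) /
      (ρ (k + 1) - p (k + 2) * Λ (k + 1)) := (one_le_div hBpos).mpr hABle
  calc Λ (k + 1) / Λ (k + 3) = 1 * (Λ (k + 1) / Λ (k + 3)) := by norm_num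
    _ ≤ _ := mul_le_mul_of_nonneg_right h1 (by positivity)
end

section
/- Let N(a) be a Poisson random variable with mean a > 0. Then E[(a - N(a))^+] / √a → 1/√(2π) as a → ∞. -/
/-!
Since `∑ n ≤ m, xⁿ/n! (x - n)` telescopes to `x^(m+1)/m!`, the shortfall has the closed form
`e^{-a} a^(m+1)/m!` with `m = ⌊a⌋`. Stirling's formula `m! ∼ √(2πm) (m/e)^m` turns this into
`√(a/(2π))` times `exp (m log (a/m) + m - a) √(a/m)`, and both factors tend to `1` because
`0 ≤ a - m < 1`.
-/

open Real Filter

/-- `E[(a - N(a))⁺]` for `N(a)` Poisson with mean `a`. -/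
noncomputable def poissonShortfall (a : ℝ) : ℝ :=
  ∑' n : ℕ, (Real.exp (-a) * a ^ n / (Nat.factorial n)) * max (a - n) 0

open scoped Nat
open Topology Stirling

theorem sum_range_pow_div_factorial_mul_sub (x : ℝ) (m : ℕ) :
    ∑ n ∈ Finset.range (m + 1), x ^ n / n ! * (x - n) = x ^ (m + 1) / m ! := by
  induction m with
  | zero => simp
  | succ k ih =>
    rw [Finset.sum_range_succ, ih, Nat.factorial_succ]
    push_cast
    field_simp
    ring

theorem poissonShortfall_eq {a : ℝ} (ha : 0 ≤ a) :
    poissonShortfall a = exp (-a) * a ^ (⌊a⌋₊ + 1) / ⌊a⌋₊ ! := by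
  rw [poissonShortfall, tsum_eq_sum (s := Finset.range (⌊a⌋₊ + 1)), mul_div_assoc,
    ← sum_range_pow_div_factorial_mul_sub, Finset.mul_sum]
  · refine Finset.sum_congr rfl fun n hn => ?_
    have hna : (n : ℝ) ≤ a :=
      (Nat.cast_le.2 (Nat.lt_succ_iff.1 (Finset.mem_range.1 hn))).trans (Nat.floor_le ha)
    rw [max_eq_left (sub_nonneg.2 hna)]
    ring
  · intro n hn
    have han : a < n := (Nat.floor_lt ha).1 (by simpa using hn)
    rw [max_eq_right (by linarith), mul_zero]

theorem mul_log_div_add_sub_nonpos {x y : ℝ} (hx : 0 < x) (hy : 0 < y) :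
    y * log (x / y) + y - x ≤ 0 := by
  have := mul_le_mul_of_nonneg_left (log_le_sub_one_of_pos (div_pos hx hy)) hy.le
  rw [mul_sub, mul_div_cancel₀ x hy.ne', mul_one] at this
  linarith

theorem neg_sq_div_le_mul_log_div_add_sub {x y : ℝ} (hx : 0 < x) (hy : 0 < y) :
    -((x - y) ^ 2 / x) ≤ y * log (x / y) + y - x := by
  have hlog : 1 - y / x ≤ log (x / y) := by
    simpa using one_sub_inv_le_log_of_pos (div_pos hx hy)
  have := mul_le_mul_of_nonneg_left hlog hy.le
  have hsq : -((x - y) ^ 2 / x) = y * (1 - y / x) + y - x := by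
    field_simp
    ring
  linarith

theorem tendsto_nat_floor_mul_log_div_add_sub_atTop :
    Tendsto (fun a : ℝ => ⌊a⌋₊ * log (a / ⌊a⌋₊) + ⌊a⌋₊ - a) atTop (𝓝 0) := by
  refine tendsto_of_tendsto_of_tendsto_of_le_of_le' (g := fun a => -a⁻¹)
    (by simpa using (tendsto_inv_atTop_zero (𝕜 := ℝ)).neg) tendsto_const_nhds ?_ ?_
  · filter_upwards [eventually_ge_atTop 1] with a ha
    have ha0 : 0 < a := zero_lt_one.trans_le ha
    have hm : (0 : ℝ) < ⌊a⌋₊ := by exact_mod_cast Nat.floor_pos.2 ha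
    have hfrac : (a - ⌊a⌋₊) ^ 2 ≤ 1 := by
      nlinarith [Nat.floor_le ha0.le, Nat.lt_floor_add_one a]
    calc -a⁻¹ ≤ -((a - ⌊a⌋₊) ^ 2 / a) := by
          rw [inv_eq_one_div]; gcongr
      _ ≤ _ := neg_sq_div_le_mul_log_div_add_sub ha0 hm
  · filter_upwards [eventually_ge_atTop 1] with a ha
    exact mul_log_div_add_sub_nonpos (zero_lt_one.trans_le ha)
      (by exact_mod_cast Nat.floor_pos.2 ha)

theorem exp_neg_mul_pow_succ_div_factorial_div_sqrt {x : ℝ} (hx : 0 < x) {m : ℕ} (hm : 0 < m) :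
    exp (-x) * x ^ (m + 1) / m ! / √x =
      exp (m * log (x / m) + m - x) * √(x / m) / (√2 * stirlingSeq m) := by
  have hm' : (0 : ℝ) < m := by exact_mod_cast hm
  have hexp : exp (m * log (x / m) + m - x) = (x / m) ^ m * exp 1 ^ m * exp (-x) := by
    rw [sub_eq_add_neg, exp_add, exp_add, exp_nat_mul, exp_log (by positivity), ← exp_nat_mul,
      mul_one]
  rw [hexp, stirlingSeq, sqrt_div hx.le, sqrt_mul zero_le_two]
  field_simp
  rw [sq_sqrt hx.le, div_pow, div_pow]
  field_simp
  ring

theorem tendsto_sqrt_div_nat_floor_atTop :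
    Tendsto (fun a : ℝ => √(a / ⌊a⌋₊)) atTop (𝓝 1) := by
  simpa using ((tendsto_nat_floor_div_atTop.inv₀ one_ne_zero).sqrt)

/-- `E[(a - N(a))⁺] ∼ √(a/(2π))` as `a → ∞`. -/
theorem poisson_shortfall_asymptotic :
    Tendsto (fun a : ℝ => poissonShortfall a / Real.sqrt a) atTop
      (nhds (1 / Real.sqrt (2 * Real.pi))) := by
  have hexp : Tendsto (fun a : ℝ => exp (⌊a⌋₊ * log (a / ⌊a⌋₊) + ⌊a⌋₊ - a)) atTop (𝓝 1) := by
    simpa [Function.comp_def] using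
      (continuous_exp.tendsto 0).comp tendsto_nat_floor_mul_log_div_add_sub_atTop
  have hstirling : Tendsto (fun a : ℝ => √2 * stirlingSeq ⌊a⌋₊) atTop (𝓝 √(2 * π)) := by
    rw [sqrt_mul zero_le_two]
    exact (tendsto_stirlingSeq_sqrt_pi.comp tendsto_nat_floor_atTop).const_mul _
  rw [← one_mul (1 : ℝ)]
  refine ((hexp.mul tendsto_sqrt_div_nat_floor_atTop).div hstirling (by positivity)).congr' ?_
  filter_upwards [eventually_ge_atTop 1] with a ha
  rw [poissonShortfall_eq (zero_le_one.trans ha),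
    exp_neg_mul_pow_succ_div_factorial_div_sqrt (zero_lt_one.trans_le ha) (Nat.floor_pos.2 ha)]
  rfl
end

section
/- Let M be the (W+1)×(W+1) lower-triangular stochastic matrix with M_{00}=1 and, for row d ≥ 1, M_{d,d-j} = q_j for 1 ≤ j ≤ d and M_{dd} = 1 - q_1 - ··· - q_d, where q_j ≥ 0 and Σ_j q_j ≤ 1. Then the function G(μ) = zᵀ e^{-μ} e^{μM} w, with z the indicator of state W and w = (0,1,...,W)ᵀ, has derivative G'(μ) = -zᵀ e^{-μ}(I-M)e^{μM} w ≤ 0 and second derivative G''(μ) = zᵀ e^{-μ}(I-M)² e^{μM} w ≥ 0; hence G is nonincreasing and convex in μ ≥ 0. -/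
open Finset Matrix NormedSpace

/-!
Since `e^{-μ} e^{μM} = e^{μ(M-1)}`, we have `G(μ) = zᵀ e^{μ(M-1)} w`, and each differentiation
brings down a factor `M - 1 = -(1 - M)`. For `μ ≥ 0` the matrix `e^{μ(M-1)} = e^{-μ} e^{μM}` is
entrywise nonnegative, and so is `z`, so the signs of `G'` and `G''` are those of `-(1 - M) w`
and `(1 - M)² w`. For a lower-triangular stochastic `M` one has
`((1 - M) v)_d = ∑_e M_{de} (v_d - v_e)`, which is nonnegative whenever `v` is nondecreasing;
this applies to `v = w` and to `v = (1 - M) w`, whose `d`-th entry `∑_{j ≤ d} j q_j` is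
nondecreasing in `d`.
-/

namespace Matrix

variable {n : Type*} [Fintype n]

theorem mulVec_nonneg {R : Type*} [Semiring R] [PartialOrder R] [IsOrderedRing R]
    {A : Matrix n n R} (hA : ∀ i j, 0 ≤ A i j) {v : n → R} (hv : 0 ≤ v) : 0 ≤ A *ᵥ v :=
  fun i => dotProduct_nonneg_of_nonneg (hA i) hv

section Stochastic

variable {R : Type*} [Ring R] [DecidableEq n] {M : Matrix n n R}

theorem one_sub_mulVec_apply_eq_sum (hrow : ∀ i, ∑ j, M i j = 1) (v : n → R) (i : n) :
    ((1 - M) *ᵥ v) i = ∑ j, M i j * (v i - v j) := by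
  rw [sub_mulVec, one_mulVec, Pi.sub_apply]
  simp only [mulVec, dotProduct, mul_sub, sum_sub_distrib, ← sum_mul, hrow, one_mul]

theorem one_sub_mulVec_nonneg_of_monotone [LinearOrder n] [PartialOrder R] [IsOrderedRing R]
    (hM : M ∈ rowStochastic R n) (hlower : M.IsLowerTriangular) {v : n → R} (hv : Monotone v) :
    0 ≤ (1 - M) *ᵥ v := fun i => by
  rw [Pi.zero_apply, one_sub_mulVec_apply_eq_sum (sum_row_of_mem_rowStochastic hM)]
  refine sum_nonneg fun j _ => ?_
  rcases le_or_gt j i with hji | hij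
  · exact mul_nonneg (nonneg_of_mem_rowStochastic hM) (sub_nonneg.2 (hv hji))
  · rw [hlower (OrderDual.toDual_lt_toDual.2 hij), zero_mul]

end Stochastic

section Exp

variable [DecidableEq n]

theorem exp_smul_sub_one (A : Matrix n n ℝ) (t : ℝ) :
    exp (t • (A - 1)) = Real.exp (-t) • exp (t • A) := by
  have hscalar : t • (A - 1) = t • A + (-t) • 1 := by
    rw [smul_sub, neg_smul, sub_eq_add_neg]
  rw [hscalar, exp_add_of_commute _ _ ((Commute.one_right _).smul_right _), smul_one_eq_diagonal,
    exp_diagonal, Pi.exp_def, ← Real.exp_eq_exp_ℝ, ← smul_one_eq_diagonal, mul_smul_comm, mul_one]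

theorem exp_apply_nonneg {A : Matrix n n ℝ} (hA : ∀ i j, 0 ≤ A i j) (i j : n) :
    0 ≤ exp A i j := by
  open scoped Norms.Operator in
  have hsum := expSeries_summable' (𝕂 := ℝ) A
  rw [congr_fun (exp_eq_tsum ℝ) A]
  exact (tsum_nonneg fun k => mul_nonneg (by positivity) (pow_apply_nonneg hA k i j)).trans_eq
    ((entryLinearMap ℝ ℝ i j).toContinuousLinearMap.map_tsum hsum).symm

theorem exp_smul_sub_one_apply_nonneg {A : Matrix n n ℝ} (hA : ∀ i j, 0 ≤ A i j) {t : ℝ}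
    (ht : 0 ≤ t) (i j : n) : 0 ≤ exp (t • (A - 1)) i j := by
  rw [exp_smul_sub_one, smul_apply, smul_eq_mul]
  exact mul_nonneg (Real.exp_nonneg _) (exp_apply_nonneg (fun i j => mul_nonneg ht (hA i j)) i j)

theorem hasDerivAt_dotProduct_exp_smul_mulVec (A : Matrix n n ℝ) (x y : n → ℝ) (t : ℝ) :
    HasDerivAt (fun s : ℝ => x ⬝ᵥ (exp (s • A) *ᵥ y)) (x ⬝ᵥ (exp (t • A) *ᵥ (A *ᵥ y))) t := by
  open scoped Norms.Operator in
  let L : Matrix n n ℝ →ₗ[ℝ] ℝ :=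
    { toFun := fun B => x ⬝ᵥ (B *ᵥ y)
      map_add' := fun B C => by rw [add_mulVec, dotProduct_add]
      map_smul' := fun c B => by rw [smul_mulVec, dotProduct_smul, RingHom.id_apply] }
  rw [mulVec_mulVec]
  exact L.toContinuousLinearMap.hasFDerivAt.comp_hasDerivAt t (hasDerivAt_exp_smul_const A t)

theorem dotProduct_exp_smul_sub_one_mulVec_nonneg {A : Matrix n n ℝ} (hA : ∀ i j, 0 ≤ A i j)
    {t : ℝ} (ht : 0 ≤ t) {x y : n → ℝ} (hx : 0 ≤ x) (hy : 0 ≤ y) :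
    0 ≤ x ⬝ᵥ (exp (t • (A - 1)) *ᵥ y) :=
  dotProduct_nonneg_of_nonneg hx (mulVec_nonneg (exp_smul_sub_one_apply_nonneg hA ht) hy)

theorem hasDerivAt_dotProduct_exp_smul_sub_one_mulVec (A : Matrix n n ℝ) (x y : n → ℝ) (t : ℝ) :
    HasDerivAt (fun s : ℝ => x ⬝ᵥ (exp (s • (A - 1)) *ᵥ y))
      (-(x ⬝ᵥ (exp (t • (A - 1)) *ᵥ ((1 - A) *ᵥ y)))) t := by
  have h := hasDerivAt_dotProduct_exp_smul_mulVec (A - 1) x y t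
  have hA : (A - 1) *ᵥ y = -((1 - A) *ᵥ y) := by rw [← neg_mulVec, neg_sub]
  rwa [hA, mulVec_neg, dotProduct_neg] at h

theorem exp_neg_smul_mul_exp_smul {A P : Matrix n n ℝ} (h : Commute P A) (t : ℝ) :
    Real.exp (-t) • (P * exp (t • A)) = exp (t • (A - 1)) * P := by
  rw [exp_smul_sub_one, smul_mul_assoc, ((h.smul_right t).exp_right).eq]

end Exp

end Matrix

theorem sum_fin_ite_lt_sub_eq_sum_Icc {β : Type*} [AddCommMonoid β] {W : ℕ} (g : ℕ → β)
    (d : Fin (W + 1)) :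
    ∑ e : Fin (W + 1), (if (e : ℕ) < d then g (d - e) else 0) = ∑ j ∈ Icc 1 (d : ℕ), g j := by
  have hfilter : (range (W + 1)).filter (· < (d : ℕ)) = range d := by
    ext e; simp only [mem_filter, mem_range]; omega
  rw [Fin.sum_univ_eq_sum_range (fun e => if e < (d : ℕ) then g (d - e) else 0), ← sum_filter,
    hfilter, ← Nat.Ico_zero_eq_range, sum_Ico_reflect _ _ (Nat.le_succ _), Nat.add_sub_cancel_left,
    Nat.sub_zero, Ico_add_one_right_eq_Icc]

def inventoryMatrix (W : ℕ) (q : ℕ → ℝ) : Matrix (Fin (W + 1)) (Fin (W + 1)) ℝ :=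
  of fun d e => if (e : ℕ) = (d : ℕ) then 1 - ∑ j ∈ Icc 1 (d : ℕ), q j
    else if (e : ℕ) < (d : ℕ) then q ((d : ℕ) - (e : ℕ)) else 0

section inventoryMatrix

variable {W : ℕ} {q : ℕ → ℝ}

theorem inventoryMatrix_isLowerTriangular : (inventoryMatrix W q).IsLowerTriangular := by
  intro d e h
  rw [OrderDual.toDual_lt_toDual, Fin.lt_def] at h
  simp only [inventoryMatrix, of_apply, if_neg h.ne', if_neg h.not_gt]

theorem sum_inventoryMatrix_apply_mul (φ : ℕ → ℝ) (d : Fin (W + 1)) :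
    ∑ e, inventoryMatrix W q d e * φ (d - e) =
      (1 - ∑ j ∈ Icc 1 (d : ℕ), q j) * φ 0 + ∑ j ∈ Icc 1 (d : ℕ), q j * φ j := by
  have hsplit : ∀ e : Fin (W + 1), inventoryMatrix W q d e * φ (d - e) =
      (if d = e then (1 - ∑ j ∈ Icc 1 (d : ℕ), q j) * φ 0 else 0) +
        if (e : ℕ) < d then q (d - e) * φ (d - e) else 0 := by
    intro e
    simp only [inventoryMatrix, of_apply, Fin.ext_iff]
    split_ifs <;> first | omega | simp_all
  rw [sum_congr rfl fun e _ => hsplit e, sum_add_distrib, sum_ite_eq, if_pos (mem_univ d),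
    sum_fin_ite_lt_sub_eq_sum_Icc (fun j => q j * φ j)]

theorem sum_inventoryMatrix_apply (d : Fin (W + 1)) : ∑ e, inventoryMatrix W q d e = 1 := by
  simpa using sum_inventoryMatrix_apply_mul (q := q) (fun _ => 1) d

theorem one_sub_inventoryMatrix_mulVec_val :
    (1 - inventoryMatrix W q : Matrix (Fin (W + 1)) (Fin (W + 1)) ℝ) *ᵥ (fun e => ((e : ℕ) : ℝ)) =
      fun d : Fin (W + 1) => ∑ j ∈ Icc 1 (d : ℕ), q j * j := by
  funext d
  have hcast : ∀ e, inventoryMatrix W q d e * ((d : ℕ) - (e : ℕ) : ℝ) =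
      inventoryMatrix W q d e * (((d : ℕ) - (e : ℕ) : ℕ) : ℝ) := by
    intro e
    rcases le_or_gt e d with h | h
    · rw [Nat.cast_sub (Fin.le_def.1 h)]
    · rw [inventoryMatrix_isLowerTriangular (OrderDual.toDual_lt_toDual.2 h), zero_mul, zero_mul]
  rw [one_sub_mulVec_apply_eq_sum sum_inventoryMatrix_apply, sum_congr rfl fun e _ => hcast e,
    sum_inventoryMatrix_apply_mul (fun k => (k : ℝ)) d, Nat.cast_zero, mul_zero, zero_add]

theorem inventoryMatrix_mem_rowStochastic (hq_nonneg : ∀ j, 1 ≤ j → j ≤ W → 0 ≤ q j)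
    (hq_sum : ∑ j ∈ Icc 1 W, q j ≤ 1) : inventoryMatrix W q ∈ rowStochastic ℝ (Fin (W + 1)) := by
  refine mem_rowStochastic_iff_sum.2 ⟨fun d e => ?_, sum_inventoryMatrix_apply⟩
  have hsub : ∑ j ∈ Icc 1 (d : ℕ), q j ≤ ∑ j ∈ Icc 1 W, q j :=
    sum_le_sum_of_subset_of_nonneg (Icc_subset_Icc_right (Nat.le_of_lt_succ d.isLt))
      fun j hj _ => hq_nonneg j (mem_Icc.1 hj).1 (mem_Icc.1 hj).2
  simp only [inventoryMatrix, of_apply]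
  split_ifs
  · linarith
  · exact hq_nonneg _ (by omega) (by omega)
  · exact le_rfl

theorem monotone_one_sub_inventoryMatrix_mulVec_val (hq_nonneg : ∀ j, 1 ≤ j → j ≤ W → 0 ≤ q j) :
    Monotone ((1 - inventoryMatrix W q : Matrix (Fin (W + 1)) (Fin (W + 1)) ℝ) *ᵥ
      fun e => ((e : ℕ) : ℝ)) := by
  rw [one_sub_inventoryMatrix_mulVec_val]
  intro d d' h
  exact sum_le_sum_of_subset_of_nonneg (Icc_subset_Icc_right (Fin.le_def.1 h)) fun j hj _ =>
    mul_nonneg (hq_nonneg j (mem_Icc.1 hj).1 ((mem_Icc.1 hj).2.trans (Nat.le_of_lt_succ d'.isLt)))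
      j.cast_nonneg

end inventoryMatrix

theorem G_deriv_monotone_convex_general (W : ℕ) (q : ℕ → ℝ)
    (hq_nonneg : ∀ j, 1 ≤ j → j ≤ W → 0 ≤ q j)
    (hq_sum : ∑ j ∈ Finset.Icc 1 W, q j ≤ 1)
    (M : Matrix (Fin (W + 1)) (Fin (W + 1)) ℝ)
    (hM : ∀ d e : Fin (W + 1), M d e =
      if (e : ℕ) = (d : ℕ) then 1 - ∑ j ∈ Finset.Icc 1 (d : ℕ), q j
      else if (e : ℕ) < (d : ℕ) then q ((d : ℕ) - (e : ℕ)) else 0)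
    (z w : Fin (W + 1) → ℝ)
    (hz : ∀ i : Fin (W + 1), z i = if (i : ℕ) = W then 1 else 0)
    (hw : ∀ i : Fin (W + 1), w i = ((i : ℕ) : ℝ))
    (G : ℝ → ℝ)
    (hG : ∀ μ, G μ = z ⬝ᵥ ((Real.exp (-μ) • NormedSpace.exp (μ • M)) *ᵥ w)) :
    (∀ μ : ℝ, 0 ≤ μ →
      HasDerivAt G (-(z ⬝ᵥ ((Real.exp (-μ) • ((1 - M) * NormedSpace.exp (μ • M))) *ᵥ w))) μ ∧
      -(z ⬝ᵥ ((Real.exp (-μ) • ((1 - M) * NormedSpace.exp (μ • M))) *ᵥ w)) ≤ 0) ∧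
    (∀ μ : ℝ, 0 ≤ μ →
      HasDerivAt (deriv G)
        (z ⬝ᵥ ((Real.exp (-μ) • ((1 - M) ^ 2 * NormedSpace.exp (μ • M))) *ᵥ w)) μ ∧
      0 ≤ z ⬝ᵥ ((Real.exp (-μ) • ((1 - M) ^ 2 * NormedSpace.exp (μ • M))) *ᵥ w)) ∧
    AntitoneOn G (Set.Ici 0) ∧ ConvexOn ℝ (Set.Ici 0) G := by
  have hMeq : M = inventoryMatrix W q := Matrix.ext hM
  have hstoch : M ∈ rowStochastic ℝ (Fin (W + 1)) :=
    hMeq ▸ inventoryMatrix_mem_rowStochastic hq_nonneg hq_sum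
  have hlower : M.IsLowerTriangular := hMeq ▸ inventoryMatrix_isLowerTriangular
  have hw : w = fun i : Fin (W + 1) => ((i : ℕ) : ℝ) := funext hw
  have hu : 0 ≤ (1 - M) *ᵥ w :=
    one_sub_mulVec_nonneg_of_monotone hstoch hlower (hw ▸ fun _ _ h => Nat.cast_le.2 h)
  have hu₂ : 0 ≤ (1 - M) *ᵥ ((1 - M) *ᵥ w) := one_sub_mulVec_nonneg_of_monotone hstoch hlower
    (hMeq ▸ hw ▸ monotone_one_sub_inventoryMatrix_mulVec_val hq_nonneg)
  have hz : 0 ≤ z := fun i => by rw [hz]; split_ifs <;> norm_num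
  have hpos : ∀ μ : ℝ, 0 ≤ μ → ∀ y, 0 ≤ y → 0 ≤ z ⬝ᵥ (exp (μ • (M - 1)) *ᵥ y) := fun μ hμ _ =>
    dotProduct_exp_smul_sub_one_mulVec_nonneg (fun _ _ => nonneg_of_mem_rowStochastic hstoch) hμ hz
  obtain rfl : G = fun μ : ℝ => z ⬝ᵥ (exp (μ • (M - 1)) *ᵥ w) :=
    funext fun μ => by rw [hG, exp_smul_sub_one]
  have hcomm : Commute (1 - M) M := (Commute.one_left M).sub_left (Commute.refl M)
  simp only [sq, exp_neg_smul_mul_exp_smul hcomm, exp_neg_smul_mul_exp_smul (hcomm.mul_left hcomm),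
    ← mulVec_mulVec]
  have hG' := hasDerivAt_dotProduct_exp_smul_sub_one_mulVec M z w
  have hG'' := fun μ => (hasDerivAt_dotProduct_exp_smul_sub_one_mulVec M z ((1 - M) *ᵥ w) μ).fun_neg
  simp only [neg_neg] at hG''
  rw [funext fun μ => (hG' μ).deriv]
  have hcont := HasDerivAt.continuousOn (s := Set.Ici 0) fun μ _ => hG' μ
  refine ⟨fun μ hμ => ⟨hG' μ, neg_nonpos.2 (hpos μ hμ _ hu)⟩,
    fun μ hμ => ⟨hG'' μ, hpos μ hμ _ hu₂⟩, ?_, ?_⟩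
  · exact antitoneOn_of_hasDerivWithinAt_nonpos (convex_Ici 0) hcont
      (fun μ _ => (hG' μ).hasDerivWithinAt)
      fun μ hμ => neg_nonpos.2 (hpos μ (interior_subset hμ) _ hu)
  · exact convexOn_of_hasDerivWithinAt2_nonneg (convex_Ici 0) hcont
      (fun μ _ => (hG' μ).hasDerivWithinAt) (fun μ _ => (hG'' μ).hasDerivWithinAt)
      fun μ hμ => hpos μ (interior_subset hμ) _ hu₂

/-- Derivatives, monotonicity and convexity of `G(μ) = zᵀ e^{-μ} e^{μM} w`
for the substochastic batch transition matrix `M`. -/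
theorem G_deriv_monotone_convex (W : ℕ) (hW : 1 ≤ W) (q : ℕ → ℝ)
    (hq_nonneg : ∀ j, 1 ≤ j → j ≤ W → 0 ≤ q j)
    (hq_sum : ∑ j ∈ Finset.Icc 1 W, q j ≤ 1)
    (M : Matrix (Fin (W + 1)) (Fin (W + 1)) ℝ)
    (hM : ∀ d e : Fin (W + 1), M d e =
      if (e : ℕ) = (d : ℕ) then 1 - ∑ j ∈ Finset.Icc 1 (d : ℕ), q j
      else if (e : ℕ) < (d : ℕ) then q ((d : ℕ) - (e : ℕ)) else 0)
    (z w : Fin (W + 1) → ℝ)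
    (hz : ∀ i : Fin (W + 1), z i = if (i : ℕ) = W then 1 else 0)
    (hw : ∀ i : Fin (W + 1), w i = ((i : ℕ) : ℝ))
    (G : ℝ → ℝ)
    (hG : ∀ μ, G μ = z ⬝ᵥ ((Real.exp (-μ) • NormedSpace.exp (μ • M)) *ᵥ w)) :
    (∀ μ : ℝ, 0 ≤ μ →
      HasDerivAt G (-(z ⬝ᵥ ((Real.exp (-μ) • ((1 - M) * NormedSpace.exp (μ • M))) *ᵥ w))) μ ∧
      -(z ⬝ᵥ ((Real.exp (-μ) • ((1 - M) * NormedSpace.exp (μ • M))) *ᵥ w)) ≤ 0) ∧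
    (∀ μ : ℝ, 0 ≤ μ →
      HasDerivAt (deriv G)
        (z ⬝ᵥ ((Real.exp (-μ) • ((1 - M) ^ 2 * NormedSpace.exp (μ • M))) *ᵥ w)) μ ∧
      0 ≤ z ⬝ᵥ ((Real.exp (-μ) • ((1 - M) ^ 2 * NormedSpace.exp (μ • M))) *ᵥ w)) ∧
    AntitoneOn G (Set.Ici 0) ∧ ConvexOn ℝ (Set.Ici 0) G :=
  G_deriv_monotone_convex_general W q hq_nonneg hq_sum M hM z w hz hw G hG
end

section
/- Let H(μ) = E[(W - N(μ))^+] for N(μ) Poisson with mean μ, and consider minimizing Σ_{ℓ=1}^m π_ℓ H(μ_ℓ) subject to Σ_{ℓ=1}^m c_ℓ μ_ℓ ≤ T and 0 ≤ μ_1 ≤ ··· ≤ μ_m, where π_ℓ > 0, c_ℓ > 0, T > 0. If c_ℓ/π_ℓ is nonincreasing in ℓ, then any solution of the unordered KKT system π_ℓ F_{W-1}(μ_ℓ) = η c_ℓ (with η ≥ 0, μ_ℓ ≥ 0, allowing π_ℓ F_{W-1}(0) ≤ η c_ℓ when μ_ℓ = 0) automatically satisfies μ_1 ≤ μ_2 ≤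 ··· ≤ μ_m. -/
open Finset

/-- Poisson CDF at `W-1`: `F μ = ∑_{k=0}^{W-1} (μ^k/k!) e^{-μ}`. -/
noncomputable def poissonCDFW1 (W : ℕ) (μ : ℝ) : ℝ :=
  ∑ k ∈ Finset.range W, μ ^ k / (Nat.factorial k) * Real.exp (-μ)

open scoped Nat

/-! The KKT condition says that `F_{W-1}(μ_ℓ)` equals the level `η c_ℓ / π_ℓ`, except that
`μ_ℓ = 0` may sit below its level. These levels are nonincreasing in `ℓ` and `F_{W-1}` is strictly
decreasing, so `μ_{ℓ+1} < μ_ℓ` would force `μ_ℓ > 0` and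
`F(μ_ℓ) = η c_ℓ/π_ℓ ≥ η c_{ℓ+1}/π_{ℓ+1} ≥ F(μ_{ℓ+1}) > F(μ_ℓ)`. -/

lemma poissonCDFW1_succ (n : ℕ) :
    poissonCDFW1 (n + 1) = fun μ => poissonCDFW1 n μ + μ ^ n / n ! * Real.exp (-μ) :=
  funext fun _ => Finset.sum_range_succ _ _

lemma hasDerivAt_poissonCDFW1_succ (n : ℕ) (μ : ℝ) :
    HasDerivAt (poissonCDFW1 (n + 1)) (-(μ ^ n / n !) * Real.exp (-μ)) μ := by
  have hexp : HasDerivAt (fun x : ℝ => Real.exp (-x)) (-Real.exp (-μ)) μ := by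
    simpa using (hasDerivAt_neg μ).exp
  induction n with
  | zero => simpa [poissonCDFW1_succ, poissonCDFW1] using hexp
  | succ n ih =>
    rw [poissonCDFW1_succ]
    refine (ih.add (((hasDerivAt_pow (n + 1) μ).div_const ((n + 1)! : ℝ)).mul hexp)).congr_deriv ?_
    rw [Nat.factorial_succ]
    push_cast
    field_simp
    ring

lemma poissonCDFW1_strictAntiOn {W : ℕ} (hW : 1 ≤ W) :
    StrictAntiOn (poissonCDFW1 W) (Set.Ici 0) := by
  obtain ⟨n, rfl⟩ := Nat.exists_eq_add_of_le' hW
  refine strictAntiOn_of_deriv_neg (convex_Ici 0)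
    (fun x _ => (hasDerivAt_poissonCDFW1_succ n x).continuousAt.continuousWithinAt) ?_
  intro x hx
  rw [interior_Ici] at hx
  rw [(hasDerivAt_poissonCDFW1_succ n x).deriv, neg_mul, neg_lt_zero]
  exact mul_pos (div_pos (pow_pos hx n) (by positivity)) (Real.exp_pos _)

/-- Stationarity at level `t`; the slack allowed at `μ = 0` is the multiplier of `0 ≤ μ`. -/
def IsKKTPoint (F : ℝ → ℝ) (t μ : ℝ) : Prop :=
  F μ = t ∨ (μ = 0 ∧ F 0 ≤ t)

lemma IsKKTPoint.apply_le {F : ℝ → ℝ} {t μ : ℝ} (h : IsKKTPoint F t μ) : F μ ≤ t := by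
  rcases h with h | ⟨rfl, h⟩
  exacts [h.le, h]

lemma IsKKTPoint.le_of_level_le {F : ℝ → ℝ} (hF : StrictAntiOn F (Set.Ici 0)) {t t' μ μ' : ℝ}
    (h : IsKKTPoint F t μ) (h' : IsKKTPoint F t' μ') (hμ : 0 ≤ μ) (hμ' : 0 ≤ μ') (ht : t' ≤ t) :
    μ ≤ μ' := by
  rcases h with h | ⟨rfl, -⟩
  · exact (hF.le_iff_ge hμ' hμ).1 ((h'.apply_le.trans ht).trans_eq h.symm)
  · exact hμ'

lemma isKKTPoint_div_of_mul {F : ℝ → ℝ} {p c η μ : ℝ} (hp : 0 < p)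
    (h : p * F μ = η * c ∨ (μ = 0 ∧ p * F 0 ≤ η * c)) : IsKKTPoint F (η * (c / p)) μ := by
  rw [← mul_div_assoc]
  refine h.imp (fun h => ?_) (And.imp_right fun h => ?_)
  · rw [eq_div_iff hp.ne', mul_comm, h]
  · rwa [le_div_iff₀ hp, mul_comm]

theorem kkt_solution_ordered_general (W : ℕ) (hW : 1 ≤ W) (m : ℕ)
    (π c : ℕ → ℝ) (hπ : ∀ ℓ, 1 ≤ ℓ → ℓ ≤ m → 0 < π ℓ)
    (hratio : ∀ ℓ, 1 ≤ ℓ → ℓ < m → c (ℓ + 1) / π (ℓ + 1) ≤ c ℓ / π ℓ)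
    (η : ℝ) (hη : 0 ≤ η) (μ : ℕ → ℝ)
    (hμ_nonneg : ∀ ℓ, 1 ≤ ℓ → ℓ ≤ m → 0 ≤ μ ℓ)
    (hKKT : ∀ ℓ, 1 ≤ ℓ → ℓ ≤ m →
      (π ℓ * poissonCDFW1 W (μ ℓ) = η * c ℓ) ∨
      (μ ℓ = 0 ∧ π ℓ * poissonCDFW1 W 0 ≤ η * c ℓ)) :
    ∀ ℓ, 1 ≤ ℓ → ℓ < m → μ ℓ ≤ μ (ℓ + 1) := by
  intro ℓ hℓ hℓm
  have hkkt : ∀ k, 1 ≤ k → k ≤ m → IsKKTPoint (poissonCDFW1 W) (η * (c k / π k)) (μ k) :=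
    fun k hk hkm => isKKTPoint_div_of_mul (hπ k hk hkm) (hKKT k hk hkm)
  exact (hkkt ℓ hℓ hℓm.le).le_of_level_le (poissonCDFW1_strictAntiOn hW)
    (hkkt (ℓ + 1) (by omega) hℓm)
    (hμ_nonneg ℓ hℓ hℓm.le) (hμ_nonneg (ℓ + 1) (by omega) hℓm)
    (mul_le_mul_of_nonneg_left (hratio ℓ hℓ hℓm) hη)

/-- Any solution of the unordered KKT system is automatically ordered:
`μ_1 ≤ μ_2 ≤ ⋯ ≤ μ_m`, provided `c_ℓ/π_ℓ` is nonincreasing. -/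
theorem kkt_solution_ordered (W : ℕ) (hW : 1 ≤ W) (m : ℕ)
    (π c : ℕ → ℝ) (hπ : ∀ ℓ, 1 ≤ ℓ → ℓ ≤ m → 0 < π ℓ)
    (hc : ∀ ℓ, 1 ≤ ℓ → ℓ ≤ m → 0 < c ℓ)
    (T : ℝ) (hT : 0 < T)
    (hratio : ∀ ℓ, 1 ≤ ℓ → ℓ < m → c (ℓ + 1) / π (ℓ + 1) ≤ c ℓ / π ℓ)
    (η : ℝ) (hη : 0 ≤ η) (μ : ℕ → ℝ)
    (hμ_nonneg : ∀ ℓ, 1 ≤ ℓ → ℓ ≤ m → 0 ≤ μ ℓ)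
    (hKKT : ∀ ℓ, 1 ≤ ℓ → ℓ ≤ m →
      (π ℓ * poissonCDFW1 W (μ ℓ) = η * c ℓ) ∨
      (μ ℓ = 0 ∧ π ℓ * poissonCDFW1 W 0 ≤ η * c ℓ)) :
    ∀ ℓ, 1 ≤ ℓ → ℓ < m → μ ℓ ≤ μ (ℓ + 1) :=
  kkt_solution_ordered_general W hW m π c hπ hratio η hη μ hμ_nonneg hKKT
end
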